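/- arXiv:2104.14113 — 3 statements merged into one kernel-verified Lean document; each statement's English description precedes it below -/
import Mathlib

section
/- Let T ≥ 2 be a natural number, α > 0 and C ≥ 0 be real numbers, and let y : ℕ → ℝ be a nondecreasing sequence with y(1) = 0 such that C − y(t) ≤ α·(y(t+1) − y(t)) for every t with 1 ≤ t ≤ T−1. Then (1 − exp(−(T−1)/α))·C ≤ y(T). -/
/-- Abstract recurrence underlying Lemma `bo_main_inequality`: a single-step progress
inequality relative to a target value `C` implies exponential convergence of `y T` to `C`. -/
theorem stmt0 (T : ℕ) (hT : 2 ≤ T) (α C : ℝ) (hα : 0 < α) (hC : 0 ≤ C)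
    (y : ℕ → ℝ) (hmono : Monotone y) (hy1 : y 1 = 0)
    (hstep : ∀ t : ℕ, 1 ≤ t → t ≤ T - 1 → C - y t ≤ α * (y (t + 1) - y t)) :
    (1 - Real.exp (-((T : ℝ) - 1) / α)) * C ≤ y T := by
  have key : ∀ t : ℕ, 1 ≤ t → t ≤ T → C - y t ≤ Real.exp (-((t : ℝ) - 1) / α) * C := by
    intro t ht
    induction t, ht using Nat.le_induction with
    | base => intro _; simp [hy1, hC]
    | succ n hn ih =>
      intro hnT
      have hn' : n ≤ T := by omega
      have hih := ih hn'
      have hstep' := hstep n hn (by omega)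
      have hmono' : y n ≤ y (n + 1) := hmono (Nat.le_succ n)
      have hexp : (0:ℝ) < Real.exp (-((n : ℝ)) / α) := Real.exp_pos _
      have hexp2 : (0:ℝ) < Real.exp (-((n : ℝ) - 1) / α) := Real.exp_pos _
      have hgoal : C - y (n + 1) ≤ Real.exp (-((n : ℝ)) / α) * C := by
        rcases le_or_gt (C - y (n+1)) 0 with h | h
        · exact h.trans (by positivity)
        · -- C - y n > 0 too
          have hgn : 0 < C - y n := by linarith
          -- from step: C - y(n+1) ≤ (1 - 1/α)(C - y n)
          have h1 : C - y (n+1) ≤ (1 - 1/α) * (C - y n) := by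
            have h2 : α * (C - y (n+1)) ≤ (α - 1) * (C - y n) := by nlinarith
            have h3 : (1 - 1/α) * (C - y n) = ((α - 1) * (C - y n)) / α := by
              field_simp
            rw [h3, le_div_iff₀ hα]
            linarith
          have hfac : (1 - 1/α) ≤ Real.exp (-(1/α)) := by
            have := Real.add_one_le_exp (-(1/α))
            linarith
          have hfacpos : 0 < 1 - 1/α := by
            by_contra hc
            push_neg at hc
            nlinarith
          calc C - y (n+1) ≤ (1 - 1/α) * (C - y n) := h1
            _ ≤ Real.exp (-(1/α)) * (Real.exp (-((n : ℝ) - 1) / α) * C) := by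
                apply mul_le_mul hfac (hih) (le_of_lt hgn) (le_of_lt (lt_of_lt_of_le hfacpos hfac))
            _ = Real.exp (-((n : ℝ)) / α) * C := by
                rw [← mul_assoc, ← Real.exp_add]
                ring_nf
      have : ((n:ℝ) + 1 - 1) = (n:ℝ) := by ring
      push_cast
      rw [this]
      exact hgoal
  have h := key T (by omega) le_rfl
  nlinarith [h]
end

section
/- For every real x, the standard expected improvement is strictly positive: φ(x) − x·Φᶜ(x) > 0. -/
open MeasureTheory

/-- The standard normal density `φ(x) = (2π)^{-1/2} exp(-x²/2)`. -/
noncomputable def stdNormalPDF (x : ℝ) : ℝ :=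
  (Real.sqrt (2 * Real.pi))⁻¹ * Real.exp (-x ^ 2 / 2)

/-- The standard normal complementary CDF `Φᶜ(x) = ∫_x^∞ φ(u) du`. -/
noncomputable def stdNormalCCDF (x : ℝ) : ℝ :=
  ∫ u in Set.Ioi x, stdNormalPDF u

/-!
Since `φ' = -u φ`, the first moment of `φ` over `(x, ∞)` is `φ(x)`, so
`φ(x) - x Φᶜ(x) = ∫_x^∞ (u - x) φ(u) du`, the integral of a positive function over a set of
positive measure.
-/

open Filter Topology Set

theorem MeasureTheory.setIntegral_pos_of_pos {α : Type*} [MeasurableSpace α] {μ : Measure α}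
    {s : Set α} {f : α → ℝ} (hs : MeasurableSet s) (hμs : 0 < μ s) (hfi : IntegrableOn f s μ)
    (hf : ∀ a ∈ s, 0 < f a) : 0 < ∫ a in s, f a ∂μ := by
  have hf_nonneg : 0 ≤ᵐ[μ.restrict s] f :=
    (ae_restrict_mem hs).mono fun a ha ↦ (hf a ha).le
  rw [setIntegral_pos_iff_support_of_nonneg_ae hf_nonneg hfi]
  exact hμs.trans_le (measure_mono fun a ha ↦ ⟨(hf a ha).ne', ha⟩)

theorem stdNormalPDF_eq_gaussianPDFReal :
    stdNormalPDF = ProbabilityTheory.gaussianPDFReal 0 1 := by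
  funext x
  simp [stdNormalPDF, ProbabilityTheory.gaussianPDFReal]

theorem stdNormalPDF_pos (x : ℝ) : 0 < stdNormalPDF x := by
  rw [stdNormalPDF_eq_gaussianPDFReal]
  exact ProbabilityTheory.gaussianPDFReal_pos _ _ _ one_ne_zero

theorem integrable_stdNormalPDF : Integrable stdNormalPDF :=
  stdNormalPDF_eq_gaussianPDFReal ▸ ProbabilityTheory.integrable_gaussianPDFReal 0 1

theorem integrable_mul_stdNormalPDF : Integrable fun u ↦ u * stdNormalPDF u := by
  have h := (integrable_mul_exp_neg_mul_sq (b := 1 / 2) (by norm_num)).const_mul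
    (Real.sqrt (2 * Real.pi))⁻¹
  refine h.congr (ae_of_all _ fun u ↦ ?_)
  simp only [stdNormalPDF]
  ring_nf

theorem hasDerivAt_stdNormalPDF (x : ℝ) :
    HasDerivAt stdNormalPDF (-(x * stdNormalPDF x)) x := by
  have h_exponent : HasDerivAt (fun y : ℝ ↦ -y ^ 2 / 2) (-x) x :=
    ((hasDerivAt_id x).pow 2).neg.div_const 2 |>.congr_deriv
      (by simp only [Nat.cast_ofNat, id_eq, mul_one]; ring)
  exact (h_exponent.exp.const_mul _).congr_deriv (by simp only [stdNormalPDF]; ring)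

theorem tendsto_stdNormalPDF_atTop : Tendsto stdNormalPDF atTop (𝓝 0) := by
  have h_exp : Tendsto (fun x : ℝ ↦ Real.exp (-x ^ 2 / 2)) atTop (𝓝 0) :=
    Real.tendsto_exp_atBot.comp <| (tendsto_neg_atBot_iff.mpr
      (tendsto_pow_atTop two_ne_zero)).atBot_div_const two_pos
  have h := h_exp.const_mul (Real.sqrt (2 * Real.pi))⁻¹
  rw [mul_zero] at h
  exact h

theorem integral_Ioi_mul_stdNormalPDF (x : ℝ) :
    ∫ u in Ioi x, u * stdNormalPDF u = stdNormalPDF x := by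
  have h := integral_Ioi_of_hasDerivAt_of_tendsto' (f := fun u ↦ -stdNormalPDF u) (a := x)
    (fun u _ ↦ (hasDerivAt_stdNormalPDF u).neg.congr_deriv (neg_neg _))
    integrable_mul_stdNormalPDF.integrableOn tendsto_stdNormalPDF_atTop.neg
  simpa using h

theorem integral_Ioi_sub_mul_stdNormalPDF (x : ℝ) :
    ∫ u in Ioi x, (u - x) * stdNormalPDF u = stdNormalPDF x - x * stdNormalCCDF x := by
  simp_rw [sub_mul]
  rw [integral_sub integrable_mul_stdNormalPDF.integrableOn
    (integrable_stdNormalPDF.const_mul x).integrableOn, integral_Ioi_mul_stdNormalPDF,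
    integral_const_mul, stdNormalCCDF]

theorem integrable_sub_mul_stdNormalPDF (x : ℝ) :
    Integrable fun u ↦ (u - x) * stdNormalPDF u := by
  simp_rw [sub_mul]
  exact integrable_mul_stdNormalPDF.sub (integrable_stdNormalPDF.const_mul x)

/-- The standard expected improvement is strictly positive everywhere. -/
theorem stmt3 (x : ℝ) : stdNormalPDF x - x * stdNormalCCDF x > 0 := by
  rw [← integral_Ioi_sub_mul_stdNormalPDF]
  exact setIntegral_pos_of_pos measurableSet_Ioi (by simp)
    (integrable_sub_mul_stdNormalPDF x).integrableOn
    fun u hu ↦ mul_pos (sub_pos.mpr hu) (stdNormalPDF_pos u)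
end

section
/- Let N ≥ 2, let F₁,…,F_N be real random variables on a common probability space such that for each n the law of F_n is Gaussian with mean m_n and standard deviation σ_n > 0, and let τ ∈ ℝ. Then E[max(max_{n∈[N]} F_n − τ, 0)] ≤ max( max_{n∈[N]} (m_n − τ + σ_n·√(2·log N)), 0 ) + (max_{n∈[N]} σ_n) / (2·√(2π)·log N). -/
/-!
Put `β = √(2 log N)` and `c = τ + maxₙ (mₙ - τ + σₙ β)`. Pointwise,
`(maxₙ Fₙ - τ)⁺ ≤ (c - τ)⁺ + Σₙ (Fₙ - c)⁺`, so only the marginals of the `Fₙ` matter.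
For `X ~ 𝒩(m, σ²)` with `m + σβ ≤ c`, the Gaussian density on `x ≥ c` is at most
`e^{-β²/2} / (σ√(2π)) · e^{-β(x - c)/σ}`, whence `E (X - c)⁺ ≤ σ e^{-β²/2} / (√(2π) β²)`.
The choice of `β` makes `e^{-β²/2} = 1/N`, so the `N` tail terms sum to at most
`maxₙ σₙ / (2√(2π) log N)`.
-/

open MeasureTheory ProbabilityTheory Real
open scoped NNReal

lemma integrable_max_zero_mul_exp_neg_mul {r : ℝ} (hr : 0 < r) :
    Integrable fun x : ℝ => max x 0 * exp (-(r * x)) := by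
  rw [← integrableOn_univ, ← Set.Iic_union_Ioi (a := (0 : ℝ)), integrableOn_union]
  constructor
  · refine integrableOn_zero.congr_fun (fun x hx => ?_) measurableSet_Iic
    simp [max_eq_right (Set.mem_Iic.mp hx)]
  · refine (integrableOn_rpow_mul_exp_neg_mul_rpow (s := 1) (p := 1) (by norm_num) one_pos hr
      ).congr_fun (fun x hx => ?_) measurableSet_Ioi
    simp [max_eq_left (Set.mem_Ioi.mp hx).le]

lemma integral_max_zero_mul_exp_neg_mul {r : ℝ} (hr : 0 < r) :
    ∫ x : ℝ, max x 0 * exp (-(r * x)) = (r ^ 2)⁻¹ := by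
  rw [← setIntegral_eq_integral_of_forall_compl_eq_zero (s := Set.Ioi 0)
    fun x hx => by simp [max_eq_right (Set.notMem_Ioi.mp hx)]]
  calc ∫ x in Set.Ioi 0, max x 0 * exp (-(r * x))
      = ∫ x in Set.Ioi 0, x ^ ((2 : ℝ) - 1) * exp (-(r * x)) :=
        setIntegral_congr_fun measurableSet_Ioi fun x hx => by
          norm_num [max_eq_left (Set.mem_Ioi.mp hx).le]
    _ = (1 / r) ^ (2 : ℝ) * Gamma 2 := integral_rpow_mul_exp_neg_mul_Ioi two_pos hr
    _ = (r ^ 2)⁻¹ := by norm_num [Gamma_two]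

lemma gaussianPDFReal_le_of_add_mul_le {m σ β c x : ℝ} {v : ℝ≥0} (hv : (v : ℝ) = σ ^ 2)
    (hσ : 0 < σ) (hβ : 0 ≤ β) (hc : m + σ * β ≤ c) (hx : c ≤ x) :
    gaussianPDFReal m v x ≤ (σ * √(2 * π))⁻¹ * exp (-β ^ 2 / 2) * exp (-(β / σ * (x - c))) := by
  have hsqrt : √(2 * π * v) = σ * √(2 * π) := by
    rw [hv, mul_comm, Real.sqrt_mul (sq_nonneg σ), Real.sqrt_sq hσ.le]
  rw [gaussianPDFReal, hsqrt, mul_assoc, ← exp_add, hv]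
  gcongr
  -- `(x - m)² ≥ (x - c + σβ)² ≥ σ²β² + 2σβ(x - c)`, since `x - c ≥ 0`.
  have hxm : (x - c) + σ * β ≤ x - m := by linarith
  have hsq : ((x - c) + σ * β) ^ 2 ≤ (x - m) ^ 2 := by gcongr
  rw [div_le_iff₀ (by positivity)]
  field_simp
  nlinarith [sq_nonneg (x - c)]

lemma integral_max_sub_zero_gaussianReal_le {m σ β c : ℝ} {v : ℝ≥0} (hv : (v : ℝ) = σ ^ 2)
    (hσ : 0 < σ) (hβ : 0 < β) (hc : m + σ * β ≤ c) :
    ∫ x, max (x - c) 0 ∂gaussianReal m v ≤ σ * exp (-β ^ 2 / 2) / (√(2 * π) * β ^ 2) := by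
  have hv0 : v ≠ 0 := by
    rintro rfl
    simp [eq_comm, hσ.ne'] at hv
  set K := (σ * √(2 * π))⁻¹ * exp (-β ^ 2 / 2)
  have hr : 0 < β / σ := div_pos hβ hσ
  have hdom : Integrable fun x => K * (max (x - c) 0 * exp (-(β / σ * (x - c)))) :=
    ((integrable_max_zero_mul_exp_neg_mul hr).comp_sub_right c).const_mul K
  calc ∫ x, max (x - c) 0 ∂gaussianReal m v
      = ∫ x, gaussianPDFReal m v x * max (x - c) 0 := integral_gaussianReal_eq_integral_smul hv0
    _ ≤ ∫ x, K * (max (x - c) 0 * exp (-(β / σ * (x - c)))) := by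
        refine integral_mono_of_nonneg (ae_of_all _ fun x => ?_) hdom (ae_of_all _ fun x => ?_)
        · exact mul_nonneg (gaussianPDFReal_nonneg m v x) (le_max_right _ _)
        · rcases le_total x c with hx | hx
          · simp [max_eq_right (sub_nonpos.mpr hx)]
          · have hxc : 0 ≤ x - c := sub_nonneg.mpr hx
            have hpdf := gaussianPDFReal_le_of_add_mul_le hv hσ hβ.le hc hx
            simp only [max_eq_left hxc, K]
            linarith [mul_le_mul_of_nonneg_right hpdf hxc]
    _ = K * ((β / σ) ^ 2)⁻¹ := by
        rw [integral_const_mul, integral_sub_right_eq_self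
          (fun x => max x 0 * exp (-(β / σ * x))) c, integral_max_zero_mul_exp_neg_mul hr]
    _ = σ * exp (-β ^ 2 / 2) / (√(2 * π) * β ^ 2) := by
        simp only [K]
        field_simp

lemma max_sup'_sub_le_add_sum {ι : Type*} {s : Finset ι} (hs : s.Nonempty) (x : ι → ℝ)
    (τ c : ℝ) : max (s.sup' hs x - τ) 0 ≤ max (c - τ) 0 + ∑ i ∈ s, max (x i - c) 0 := by
  have hsum : ∀ i ∈ s, max (x i - c) 0 ≤ ∑ j ∈ s, max (x j - c) 0 :=
    fun i hi => Finset.single_le_sum (fun j _ => le_max_right (x j - c) 0) hi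
  obtain ⟨k, hk, hxk⟩ := s.exists_mem_eq_sup' hs x
  refine max_le ?_ (add_nonneg (le_max_right _ _) ((le_max_right _ _).trans (hsum k hk)))
  linarith [le_max_left (c - τ) 0, le_max_left (x k - c) 0, hsum k hk]

lemma integral_max_sup'_sub_le {Ω ι : Type*} [MeasurableSpace Ω] {P : Measure Ω}
    [IsProbabilityMeasure P] {s : Finset ι} (hs : s.Nonempty) {F : ι → Ω → ℝ}
    (hF : ∀ i ∈ s, Integrable (F i) P) (τ c : ℝ) :
    ∫ ω, max (s.sup' hs (fun i => F i ω) - τ) 0 ∂P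
      ≤ max (c - τ) 0 + ∑ i ∈ s, ∫ ω, max (F i ω - c) 0 ∂P := by
  have hint : ∀ i ∈ s, Integrable (fun ω => max (F i ω - c) 0) P :=
    fun i hi => ((hF i hi).sub (integrable_const c)).pos_part
  calc ∫ ω, max (s.sup' hs (fun i => F i ω) - τ) 0 ∂P
      ≤ ∫ ω, max (c - τ) 0 + ∑ i ∈ s, max (F i ω - c) 0 ∂P :=
        integral_mono_of_nonneg (ae_of_all _ fun ω => le_max_right _ _)
          ((integrable_const _).add (integrable_finsetSum s hint))
          (ae_of_all _ fun ω => max_sup'_sub_le_add_sum hs _ τ c)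
    _ = max (c - τ) 0 + ∑ i ∈ s, ∫ ω, max (F i ω - c) 0 ∂P := by
        rw [integral_add (integrable_const _) (integrable_finsetSum s hint),
          integral_finsetSum s hint, integral_const, probReal_univ, one_smul]

lemma integrable_of_map_eq_gaussianReal {Ω : Type*} [MeasurableSpace Ω] {P : Measure Ω}
    {X : Ω → ℝ} {m : ℝ} {v : ℝ≥0} (hX : P.map X = gaussianReal m v) : Integrable X P := by
  have hXm : AEMeasurable X P := aemeasurable_of_map_neZero (by rw [hX]; infer_instance)
  exact (integrable_map_measure aestronglyMeasurable_id hXm).mp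
    (hX ▸ (memLp_id_gaussianReal 1).integrable le_rfl)

lemma integral_max_sub_zero_le_of_map_eq_gaussianReal {Ω : Type*} [MeasurableSpace Ω]
    {P : Measure Ω} {X : Ω → ℝ} {m σ β c : ℝ} {v : ℝ≥0} (hX : P.map X = gaussianReal m v)
    (hv : (v : ℝ) = σ ^ 2) (hσ : 0 < σ) (hβ : 0 < β) (hc : m + σ * β ≤ c) :
    ∫ ω, max (X ω - c) 0 ∂P ≤ σ * exp (-β ^ 2 / 2) / (√(2 * π) * β ^ 2) := by
  rw [← integral_map (f := fun x => max (x - c) 0)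
    (integrable_of_map_eq_gaussianReal hX).aemeasurable
    (by fun_prop : Continuous fun x : ℝ => max (x - c) 0).aestronglyMeasurable, hX]
  exact integral_max_sub_zero_gaussianReal_le hv hσ hβ hc

/-- Upper bound on the multivariate expected improvement (Lemma `bound_nei`): only the
one-dimensional Gaussian marginals are used. -/
theorem stmt7 {Ω : Type*} [MeasurableSpace Ω] (P : Measure Ω) [IsProbabilityMeasure P]
    {N : ℕ} (hN : 2 ≤ N) (F : Fin N → Ω → ℝ) (m σ : Fin N → ℝ) (hσ : ∀ n, 0 < σ n)
    (hF : ∀ n, Measure.map (F n) P = gaussianReal (m n) ⟨(σ n) ^ 2, sq_nonneg _⟩)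
    (τ : ℝ) :
    (∫ ω, max ((Finset.univ.sup' (Finset.univ_nonempty_iff.mpr ⟨⟨0, by omega⟩⟩)
          fun n => F n ω) - τ) 0 ∂P)
      ≤ max (Finset.univ.sup' (Finset.univ_nonempty_iff.mpr ⟨⟨0, by omega⟩⟩)
            fun n => m n - τ + σ n * Real.sqrt (2 * Real.log N)) 0
        + (Finset.univ.sup' (Finset.univ_nonempty_iff.mpr ⟨⟨0, by omega⟩⟩) σ)
          / (2 * Real.sqrt (2 * Real.pi) * Real.log N) := by
  have hne : (Finset.univ : Finset (Fin N)).Nonempty :=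
    Finset.univ_nonempty_iff.mpr ⟨⟨0, by omega⟩⟩
  have hlog : 0 < log N := log_pos (by exact_mod_cast hN)
  set β := √(2 * log N)
  have hβ : 0 < β := sqrt_pos.mpr (by positivity)
  set c := τ + Finset.univ.sup' hne fun n => m n - τ + σ n * β
  have hc : ∀ n, m n + σ n * β ≤ c := fun n => by
    linarith [Finset.univ.le_sup' (fun n => m n - τ + σ n * β) (Finset.mem_univ n)]
  set σmax := Finset.univ.sup' hne σ
  have htail (n : Fin N) :
      ∫ ω, max (F n ω - c) 0 ∂P ≤ σmax * exp (-β ^ 2 / 2) / (√(2 * π) * β ^ 2) := by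
    refine (integral_max_sub_zero_le_of_map_eq_gaussianReal (hF n) rfl (hσ n) hβ (hc n)).trans ?_
    gcongr
    exact Finset.univ.le_sup' σ (Finset.mem_univ n)
  have hexp : exp (-β ^ 2 / 2) = (N : ℝ)⁻¹ := by
    rw [sq_sqrt (by positivity), neg_div, mul_div_cancel_left₀ _ two_ne_zero, exp_neg,
      exp_log (by positivity)]
  calc ∫ ω, max (Finset.univ.sup' hne (fun n => F n ω) - τ) 0 ∂P
      ≤ max (c - τ) 0 + ∑ n, ∫ ω, max (F n ω - c) 0 ∂P :=
        integral_max_sup'_sub_le hne (fun n _ => integrable_of_map_eq_gaussianReal (hF n)) τ c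
    _ ≤ max (c - τ) 0 + ∑ _n : Fin N, σmax * exp (-β ^ 2 / 2) / (√(2 * π) * β ^ 2) := by
        gcongr with n
        exact htail n
    _ = _ := by
        rw [Finset.sum_const, Finset.card_univ, Fintype.card_fin, nsmul_eq_mul,
          hexp, add_sub_cancel_left, sq_sqrt (by positivity)]
        congr 1
        field_simp
end
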